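/- arXiv:1705.10200 — 2 statements merged into one kernel-verified Lean document; each statement's English description precedes it below -/
import Mathlib

section
/- Let n, l ≥ 1, 1 ≤ p,q ≤ n, and r ≥ 1. Then in U(Q(n))^{⊗l}: U^{⊗l}∘Δ_l^{op}(T_{q,p}^{(r)+}) = (−1)^r times the sum over all 1 ≤ p_1,…,p_{r−1} ≤ n and all l ≥ i_1 ≥ i_2 ≥ … ≥ i_r ≥ 1 of the ordered products Π_{a=1}^{r} (x^{i_a}_{p_{a−1}, p_a} + (−1)^{r−a} ξ^{i_a}_{p_{a−1}, p_a}), where p_0 := p and p_r := q. -/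
noncomputable section
open scoped Classical

/-! # The universal enveloping superalgebra `U(Q(n))` of the queer Lie superalgebra

`U(Q(n))` is presented by even generators `e i j` and odd generators `f i j`
(`1 ≤ i,j ≤ n`) subject to the relations
`[e i j, e k l] = δ_{jk} e i l - δ_{li} e k j`,
`[e i j, f k l] = δ_{jk} f i l - δ_{li} f k j`,
`f i j * f k l + f k l * f i j = δ_{jk} e i l + δ_{li} e k j`. -/

/-- Generators of `U(Q(n))`: `E i j` (even) and `F i j` (odd). -/
inductive QGen (n : ℕ) : Type
  | E : Fin n → Fin n → QGen n
  | F : Fin n → Fin n → QGen n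

/-- Kronecker delta. -/
def kd {n : ℕ} (i j : Fin n) : ℂ := if i = j then 1 else 0

/-- The defining relations of `U(Q(n))`. -/
inductive QRel (n : ℕ) : FreeAlgebra ℂ (QGen n) → FreeAlgebra ℂ (QGen n) → Prop
  | ee (i j k l : Fin n) : QRel n
      (FreeAlgebra.ι ℂ (QGen.E i j) * FreeAlgebra.ι ℂ (QGen.E k l) -
        FreeAlgebra.ι ℂ (QGen.E k l) * FreeAlgebra.ι ℂ (QGen.E i j))
      (kd j k • FreeAlgebra.ι ℂ (QGen.E i l) - kd l i • FreeAlgebra.ι ℂ (QGen.E k j))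
  | ef (i j k l : Fin n) : QRel n
      (FreeAlgebra.ι ℂ (QGen.E i j) * FreeAlgebra.ι ℂ (QGen.F k l) -
        FreeAlgebra.ι ℂ (QGen.F k l) * FreeAlgebra.ι ℂ (QGen.E i j))
      (kd j k • FreeAlgebra.ι ℂ (QGen.F i l) - kd l i • FreeAlgebra.ι ℂ (QGen.F k j))
  | ff (i j k l : Fin n) : QRel n
      (FreeAlgebra.ι ℂ (QGen.F i j) * FreeAlgebra.ι ℂ (QGen.F k l) +
        FreeAlgebra.ι ℂ (QGen.F k l) * FreeAlgebra.ι ℂ (QGen.F i j))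
      (kd j k • FreeAlgebra.ι ℂ (QGen.E i l) + kd l i • FreeAlgebra.ι ℂ (QGen.E k j))

/-- The universal enveloping superalgebra `U(Q(n))`. -/
abbrev UQ (n : ℕ) := RingQuot (QRel n)

/-- The generator `e i j` of `U(Q(n))`. -/
def Ue {n : ℕ} (i j : Fin n) : UQ n :=
  RingQuot.mkAlgHom ℂ (QRel n) (FreeAlgebra.ι ℂ (QGen.E i j))

/-- The generator `f i j` of `U(Q(n))`. -/
def Uf {n : ℕ} (i j : Fin n) : UQ n :=
  RingQuot.mkAlgHom ℂ (QRel n) (FreeAlgebra.ι ℂ (QGen.F i j))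

/-- Sergeev's elements `e_{ij}^{(m)}` and `f_{ij}^{(m)}` of `U(Q(n))`, defined recursively by
`e^{(0)} = δ`, `f^{(0)} = 0`,
`e_{ij}^{(m)} = Σ_k e_{ik} e_{kj}^{(m-1)} + (-1)^{m+1} Σ_k f_{ik} f_{kj}^{(m-1)}`,
`f_{ij}^{(m)} = Σ_k e_{ik} f_{kj}^{(m-1)} + (-1)^{m+1} Σ_k f_{ik} e_{kj}^{(m-1)}`. -/
def efU (n : ℕ) : ℕ → (Fin n → Fin n → UQ n) × (Fin n → Fin n → UQ n)
  | 0 => (fun i j => algebraMap ℂ (UQ n) (kd i j), fun _ _ => 0)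
  | m + 1 =>
      (fun i j => (∑ k, Ue i k * (efU n m).1 k j) +
        (-1 : ℂ) ^ m • ∑ k, Uf i k * (efU n m).2 k j,
       fun i j => (∑ k, Ue i k * (efU n m).2 k j) +
        (-1 : ℂ) ^ m • ∑ k, Uf i k * (efU n m).1 k j)

/-- `e_{ij}^{(m)}`. -/
def eU {n : ℕ} (m : ℕ) (i j : Fin n) : UQ n := (efU n m).1 i j
/-- `f_{ij}^{(m)}`. -/
def fU {n : ℕ} (m : ℕ) (i j : Fin n) : UQ n := (efU n m).2 i j

/-- For `l ∣ n`, the index `l(p-1)+i` of `{1,…,n}` (0-based: block `p`, position `i`). -/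
def bidx {n l : ℕ} (h : l ∣ n) (p : Fin (n / l)) (i : Fin l) : Fin n :=
  ⟨l * p.val + i.val, by
    have h1 : i.val < l := i.isLt
    have h2 : p.val + 1 ≤ n / l := p.isLt
    have h3 : l * (p.val + 1) ≤ l * (n / l) := Nat.mul_le_mul_left l h2
    have h4 : n / l * l ≤ n := Nat.div_mul_le_self n l
    have h5 : l * (p.val + 1) = l * p.val + l := Nat.mul_succ l p.val
    have h6 : l * (n / l) = n / l * l := Nat.mul_comm l (n / l)
    omega⟩
set_option linter.unusedVariables false

/-! # The character `χ`, the left ideal `I_χ` and the finite W-algebra data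

Here `l ∣ n` and `χ` corresponds to the even nilpotent element of `Q(n)` all of whose
Jordan blocks have size `l`.  The subalgebra `m = ⊕_{j<0} g_j` is spanned by the
elements `e_{l(p-1)+i+k, l(q-1)+i}` and `f_{l(p-1)+i+k, l(q-1)+i}` (`k ≥ 1`), and
`χ(e_{l(p-1)+i+1, l(q-1)+i}) = δ_{pq}` and `χ = 0` on the other basis elements. -/

/-- The set of elements `a - χ(a)` for `a` ranging over the standard basis of `m`;
(rows/columns written 0-based: `a` is the position of the row inside its block `p`,
`b` the position of the column inside its block `q`, with `b < a`). -/
def mSet (n l : ℕ) (h : l ∣ n) : Set (UQ n) :=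
  { x : UQ n | ∃ (p q : Fin (n / l)) (a b : Fin l), b.val < a.val ∧
      (x = Ue (bidx h p a) (bidx h q b) -
            algebraMap ℂ (UQ n) (if a.val = b.val + 1 ∧ p = q then 1 else 0) ∨
       x = Uf (bidx h p a) (bidx h q b)) }

/-- The left ideal `I_χ` of `U(Q(n))` generated by the `a - χ(a)`, `a ∈ m`. -/
def Ichi (n l : ℕ) (h : l ∣ n) : Submodule (UQ n) (UQ n) :=
  Submodule.span (UQ n) (mSet n l h)

/-- The quotient `U(Q(n))/I_χ` (as a `ℂ`-vector space). -/
abbrev Wq (n l : ℕ) (h : l ∣ n) := UQ n ⧸ (Ichi n l h).restrictScalars ℂ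

/-- The quotient map `π : U(Q(n)) → U(Q(n))/I_χ`. -/
def piq (n l : ℕ) (h : l ∣ n) : UQ n →ₗ[ℂ] Wq n l h :=
  ((Ichi n l h).restrictScalars ℂ).mkQ

/-- `y` super-commutes with `m` into `I_χ`:  `[a, y] ∈ I_χ` for every `a` in the standard
basis of `m`.  Here the super-commutator of the odd element `f` with (the possibly
non-homogeneous) `y` is `f * y - σ(y) * f`, where `σ` is the parity involution of
`U(Q(n))` (the algebra automorphism fixing the `e`'s and negating the `f`'s). -/
def Wcond {n l : ℕ} (h : l ∣ n) (σ : UQ n →ₐ[ℂ] UQ n) (y : UQ n) : Prop :=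
  ∀ (p q : Fin (n / l)) (a b : Fin l), b.val < a.val →
    (Ue (bidx h p a) (bidx h q b) * y - y * Ue (bidx h p a) (bidx h q b) ∈ Ichi n l h) ∧
    (Uf (bidx h p a) (bidx h q b) * y - σ y * Uf (bidx h p a) (bidx h q b) ∈ Ichi n l h)

/-- The finite W-algebra `W_χ = {π(y) | [a, y] ∈ I_χ for all a ∈ m}`, as a subset of
`U(Q(n))/I_χ`.  (Its product is `π(y₁)·π(y₂) = π(y₁y₂)`.) -/
def WchiSet (n l : ℕ) (h : l ∣ n) (σ : UQ n →ₐ[ℂ] UQ n) : Set (Wq n l h) :=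
  { w : Wq n l h | ∃ y : UQ n, Wcond h σ y ∧ piq n l h y = w }

/-- The standard basis elements of the parabolic subalgebra `p = ⊕_{j≥0} g_j`. -/
def pSet (n l : ℕ) (h : l ∣ n) : Set (UQ n) :=
  { x : UQ n | ∃ (p q : Fin (n / l)) (a b : Fin l), a.val ≤ b.val ∧
      (x = Ue (bidx h p a) (bidx h q b) ∨ x = Uf (bidx h p a) (bidx h q b)) }

/-- The standard basis elements of the nilradical `n = ⊕_{j>0} g_j` of `p`. -/
def nSet (n l : ℕ) (h : l ∣ n) : Set (UQ n) :=
  { x : UQ n | ∃ (p q : Fin (n / l)) (a b : Fin l), a.val < b.val ∧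
      (x = Ue (bidx h p a) (bidx h q b) ∨ x = Uf (bidx h p a) (bidx h q b)) }

/-- The kernel of the Harish-Chandra projection `ϑ : U(p) → U(g₀)`, realized inside
`U(Q(n))`: the `ℂ`-span of `U(p)·n`.  (By the PBW theorem, `U(g) = U(p) ⊕ I_χ` and
`U(p) = U(g₀) ⊕ U(p)n`, so for `y ∈ U(g)`, `ϑ(pr(y)) = t` iff
`y - t ∈ I_χ + U(p)n`.) -/
def Lspan (n l : ℕ) (h : l ∣ n) : Submodule ℂ (UQ n) :=
  Submodule.span ℂ
    { x : UQ n | ∃ u ∈ Algebra.adjoin ℂ (pSet n l h), ∃ g ∈ nSet n l h, x = u * g }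

/-- A descriptor of a generator of `U(p)`:  `(b, p, q, a, c)` is
`e_{l(p-1)+(a+1), l(q-1)+(c+1)}` if `b = false` and `f_{…}` if `b = true`
(required: `a ≤ c`). -/
def pgElem {n l : ℕ} (h : l ∣ n) :
    Bool × Fin (n / l) × Fin (n / l) × Fin l × Fin l → UQ n
  | (b, p, q, a, c) => (if b then Uf else Ue) (bidx h p a) (bidx h q c)

/-- Kazhdan degree `2k+2` of a `p`-generator of block offset `k = c - a`. -/
def pgDeg {l m : ℕ} (d : Bool × Fin m × Fin m × Fin l × Fin l) : ℕ :=
  2 * (d.2.2.2.2.val - d.2.2.2.1.val) + 2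

/-- Weight `2k` of a `p`-generator of block offset `k = c - a`. -/
def pgWt {l m : ℕ} (d : Bool × Fin m × Fin m × Fin l × Fin l) : ℕ :=
  2 * (d.2.2.2.2.val - d.2.2.2.1.val)

/-- Monomials in the generators of `U(p)` which are "lower" than bidegree
(Kazhdan degree `D`, weight `W`): either of Kazhdan degree `< D`, or of Kazhdan
degree `≤ D` and weight `< W`. -/
def LowSet (n l : ℕ) (h : l ∣ n) (D W : ℕ) : Set (UQ n) :=
  { x : UQ n | ∃ L : List (Bool × Fin (n / l) × Fin (n / l) × Fin l × Fin l),
      (∀ d ∈ L, d.2.2.2.1.val ≤ d.2.2.2.2.val) ∧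
      x = (L.map (pgElem h)).prod ∧
      ((L.map pgDeg).sum < D ∨ ((L.map pgDeg).sum ≤ D ∧ (L.map pgWt).sum < W)) }

/-- The span of the "lower" monomials. -/
def LowSpan (n l : ℕ) (h : l ∣ n) (D W : ℕ) : Submodule ℂ (UQ n) :=
  Submodule.span ℂ (LowSet n l h D W)

/-! # The super tensor power `U(Q(m))^{⊗l}`

Modeled as the superalgebra with generators `x^i_{pq} = 1^{⊗(l-i)} ⊗ e_{pq} ⊗ 1^{⊗(i-1)}`
(even) and `ξ^i_{pq} = 1^{⊗(l-i)} ⊗ f_{pq} ⊗ 1^{⊗(i-1)}` (odd), subject to the `U(Q(m))`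
relations in each tensor slot and to (super-)commutation between different slots. -/

/-- Generators of `U(Q(m))^{⊗l}`: `X i p q` is `x^i_{pq}` and `Xi i p q` is `ξ^i_{pq}`
(`i : Fin l` is the 0-based tensor slot, counted from the right). -/
inductive TGen (m l : ℕ) : Type
  | X : Fin l → Fin m → Fin m → TGen m l
  | Xi : Fin l → Fin m → Fin m → TGen m l

/-- Kronecker delta on slots. -/
def kdl {l : ℕ} (i j : Fin l) : ℂ := if i = j then 1 else 0

/-- The defining relations of `U(Q(m))^{⊗l}`. -/
inductive TRel (m l : ℕ) : FreeAlgebra ℂ (TGen m l) → FreeAlgebra ℂ (TGen m l) → Prop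
  | xx (i i' : Fin l) (p q r s : Fin m) : TRel m l
      (FreeAlgebra.ι ℂ (TGen.X i p q) * FreeAlgebra.ι ℂ (TGen.X i' r s) -
        FreeAlgebra.ι ℂ (TGen.X i' r s) * FreeAlgebra.ι ℂ (TGen.X i p q))
      ((kdl i i' * kd q r) • FreeAlgebra.ι ℂ (TGen.X i p s) -
        (kdl i i' * kd s p) • FreeAlgebra.ι ℂ (TGen.X i' r q))
  | xxi (i i' : Fin l) (p q r s : Fin m) : TRel m l
      (FreeAlgebra.ι ℂ (TGen.X i p q) * FreeAlgebra.ι ℂ (TGen.Xi i' r s) -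
        FreeAlgebra.ι ℂ (TGen.Xi i' r s) * FreeAlgebra.ι ℂ (TGen.X i p q))
      ((kdl i i' * kd q r) • FreeAlgebra.ι ℂ (TGen.Xi i p s) -
        (kdl i i' * kd s p) • FreeAlgebra.ι ℂ (TGen.Xi i' r q))
  | xixi (i i' : Fin l) (p q r s : Fin m) : TRel m l
      (FreeAlgebra.ι ℂ (TGen.Xi i p q) * FreeAlgebra.ι ℂ (TGen.Xi i' r s) +
        FreeAlgebra.ι ℂ (TGen.Xi i' r s) * FreeAlgebra.ι ℂ (TGen.Xi i p q))
      ((kdl i i' * kd q r) • FreeAlgebra.ι ℂ (TGen.X i p s) +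
        (kdl i i' * kd s p) • FreeAlgebra.ι ℂ (TGen.X i' r q))

/-- The superalgebra `U(Q(m))^{⊗l}`. -/
abbrev TQ (m l : ℕ) := RingQuot (TRel m l)

/-- `x^i_{pq} := 1^{⊗(l-i)} ⊗ e_{pq} ⊗ 1^{⊗(i-1)} ∈ U(Q(m))^{⊗l}`. -/
def xT {m l : ℕ} (i : Fin l) (p q : Fin m) : TQ m l :=
  RingQuot.mkAlgHom ℂ (TRel m l) (FreeAlgebra.ι ℂ (TGen.X i p q))

/-- `ξ^i_{pq} := 1^{⊗(l-i)} ⊗ f_{pq} ⊗ 1^{⊗(i-1)} ∈ U(Q(m))^{⊗l}`. -/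
def xiT {m l : ℕ} (i : Fin l) (p q : Fin m) : TQ m l :=
  RingQuot.mkAlgHom ℂ (TRel m l) (FreeAlgebra.ι ℂ (TGen.Xi i p q))

/-! # The super-Yangian `Y(Q(n))` -/

/-- The index set `{±1, …, ±n}`:  `(false, a)` is the positive index `a` (even),
`(true, a)` is the negative index `-a` (odd). -/
abbrev QIdx (n : ℕ) := Bool × Fin n

/-- Negation `i ↦ -i` on indices. -/
def qneg {n : ℕ} (i : QIdx n) : QIdx n := (!i.1, i.2)

/-- The parity `p(i)`: `0` for positive `i`, `1` for negative `i`. -/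
def qpar {n : ℕ} (i : QIdx n) : ℕ := if i.1 then 1 else 0

/-- Kronecker delta on `{±1, …, ±n}`. -/
def kdq {n : ℕ} (i j : QIdx n) : ℂ := if i = j then 1 else 0

/-- Generators of `Y(Q(n))`: `T m i j` encodes `T^{(m+1)}_{i,j}`. -/
inductive YGen (n : ℕ) : Type
  | T : ℕ → QIdx n → QIdx n → YGen n

/-- `T^{(m)}_{i,j}` in the free algebra, with `T^{(0)}_{i,j} = δ_{ij}`. -/
def Tf {n : ℕ} : ℕ → QIdx n → QIdx n → FreeAlgebra ℂ (YGen n)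
  | 0, i, j => algebraMap ℂ _ (kdq i j)
  | m + 1, i, j => FreeAlgebra.ι ℂ (YGen.T m i j)

/-- The super-commutator `[T^{(a)}_{i,j}, T^{(b)}_{k,l}]` in the free algebra. -/
def ybr {n : ℕ} (a : ℕ) (i j : QIdx n) (b : ℕ) (k l : QIdx n) :
    FreeAlgebra ℂ (YGen n) :=
  Tf a i j * Tf b k l -
    ((-1 : ℂ) ^ ((qpar i + qpar j) * (qpar k + qpar l))) • (Tf b k l * Tf a i j)

/-- The defining relations of the super-Yangian `Y(Q(n))`: for `M, R ≥ 1`,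
`(-1)^{p(i)p(k)+p(i)p(l)+p(k)p(l)} ([T^{(M+1)}_{ij}, T^{(R-1)}_{kl}] - [T^{(M-1)}_{ij}, T^{(R+1)}_{kl}])
 = T^{(M)}_{kj}T^{(R-1)}_{il} + T^{(M-1)}_{kj}T^{(R)}_{il} - T^{(R-1)}_{kj}T^{(M)}_{il}
   - T^{(R)}_{kj}T^{(M-1)}_{il}
   + (-1)^{p(k)+p(l)} (-T^{(M)}_{-k,j}T^{(R-1)}_{-i,l} + T^{(M-1)}_{-k,j}T^{(R)}_{-i,l}
       + T^{(R-1)}_{k,-j}T^{(M)}_{i,-l} - T^{(R)}_{k,-j}T^{(M-1)}_{i,-l})`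
(here `M = m+1`, `R = r+1`), together with `T^{(m)}_{-i,-j} = (-1)^m T^{(m)}_{i,j}`. -/
inductive YRel (n : ℕ) : FreeAlgebra ℂ (YGen n) → FreeAlgebra ℂ (YGen n) → Prop
  | quad (m r : ℕ) (i j k l : QIdx n) : YRel n
      (((-1 : ℂ) ^ (qpar i * qpar k + qpar i * qpar l + qpar k * qpar l)) •
        (ybr (m + 2) i j r k l - ybr m i j (r + 2) k l))
      (Tf (m + 1) k j * Tf r i l + Tf m k j * Tf (r + 1) i l -
        Tf r k j * Tf (m + 1) i l - Tf (r + 1) k j * Tf m i l +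
        ((-1 : ℂ) ^ (qpar k + qpar l)) •
          (-(Tf (m + 1) (qneg k) j * Tf r (qneg i) l) +
            Tf m (qneg k) j * Tf (r + 1) (qneg i) l +
            Tf r k (qneg j) * Tf (m + 1) i (qneg l) -
            Tf (r + 1) k (qneg j) * Tf m i (qneg l)))
  | par (m : ℕ) (i j : QIdx n) : YRel n
      (Tf (m + 1) (qneg i) (qneg j)) (((-1 : ℂ) ^ (m + 1)) • Tf (m + 1) i j)

/-- The super-Yangian `Y(Q(n))`. -/
abbrev YQ (n : ℕ) := RingQuot (YRel n)

/-- The generator `T^{(m)}_{i,j}` of `Y(Q(n))` (with `T^{(0)}_{i,j} = δ_{ij}`). -/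
def TY {n : ℕ} (m : ℕ) (i j : QIdx n) : YQ n :=
  RingQuot.mkAlgHom ℂ (YRel n) (Tf m i j)

/-! # Values of the homomorphisms `U`, `ev`, `ēv` on the generators of `Y(Q(n))`,
and the explicit sums appearing in the main theorems. -/

/-- The value of the homomorphism `U : Y(Q(n)) → U(Q(n))` on the generator
`T^{(r)}_{i,j}`:  `U(T^{(r)}_{i,j}) = (-1)^r e^{(r)}_{j,i}`,
`U(T^{(r)}_{-i,j}) = (-1)^r f^{(r)}_{j,i}` for `i, j > 0`, and the values on the other
generators are forced by `T^{(r)}_{-i,-j} = (-1)^r T^{(r)}_{i,j}`. -/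
def Uval {n : ℕ} (r : ℕ) (i j : QIdx n) : UQ n :=
  (if j.1 then (-1 : ℂ) ^ r else 1) •
    ((-1 : ℂ) ^ r • (if xor i.1 j.1 then fU r j.2 i.2 else eU r j.2 i.2))

/-- The value of the evaluation homomorphism `ev : Y(Q(n)) → U(Q(n))` on `T^{(r)}_{i,j}`:
`ev(T^{(1)}_{i,j}) = -e_{j,i}`, `ev(T^{(1)}_{-i,j}) = -f_{j,i}` for `i, j > 0`,
`ev(T^{(0)}_{i,j}) = δ_{ij}` and `ev(T^{(r)}_{i,j}) = 0` for `r > 1` (with the values on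
the remaining generators forced by `T^{(r)}_{-i,-j} = (-1)^r T^{(r)}_{i,j}`). -/
def evval {n : ℕ} (r : ℕ) (i j : QIdx n) : UQ n :=
  (if j.1 then (-1 : ℂ) ^ r else 1) •
    (match r with
      | 0 => if xor i.1 j.1 then 0 else algebraMap ℂ (UQ n) (kd i.2 j.2)
      | 1 => -(if xor i.1 j.1 then Uf j.2 i.2 else Ue j.2 i.2)
      | _ + 2 => 0)

/-- The value of `ēv = α ∘ ev : Y(Q(n)) → U(Q(n))` on `T^{(r)}_{i,j}`, where `α` is the
principal anti-automorphism of `U(Q(n))`:  `ēv(T^{(1)}_{i,j}) = e_{j,i}`,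
`ēv(T^{(1)}_{-i,j}) = f_{j,i}` for `i, j > 0`, `ēv(T^{(0)}_{i,j}) = δ_{ij}`,
`ēv(T^{(r)}_{i,j}) = 0` for `r > 1`. -/
def bevval {n : ℕ} (r : ℕ) (i j : QIdx n) : UQ n :=
  (if j.1 then (-1 : ℂ) ^ r else 1) •
    (match r with
      | 0 => if xor i.1 j.1 then 0 else algebraMap ℂ (UQ n) (kd i.2 j.2)
      | 1 => (if xor i.1 j.1 then Uf j.2 i.2 else Ue j.2 i.2)
      | _ + 2 => 0)

/-- The sum `Σ_{p_1,…,p_{r-1}} Σ_{l ≥ i_1 ≥ i_2 ≥ … ≥ i_r ≥ 1}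
Π_{a=1}^r (x^{i_a}_{p_{a-1},p_a} + (-1)^{r-a} ξ^{i_a}_{p_{a-1},p_a})`
(with `p_0 = p`, `p_r = q`), an element of `U(Q(m))^{⊗l}`. -/
def chainProdDec (m l : ℕ) (r : ℕ) (p q : Fin m) : TQ m l :=
  ∑ c : Fin (r + 1) → Fin m, ∑ iv : Fin r → Fin l,
    (if c 0 = p ∧ c (Fin.last r) = q ∧ (∀ a b : Fin r, a ≤ b → iv b ≤ iv a)
      then (1 : ℂ) else 0) •
      (List.ofFn fun a : Fin r =>
        xT (iv a) (c a.castSucc) (c a.succ) +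
          ((-1 : ℂ) ^ (r - 1 - a.val)) • xiT (iv a) (c a.castSucc) (c a.succ)).prod

/-- The sum `Σ_{p_1,…,p_{r-1}} Σ_{1 ≤ i_1 < i_2 < … < i_r ≤ l}
Π_{a=1}^r (x^{i_a}_{p_{a-1},p_a} + (-1)^{r-a} ξ^{i_a}_{p_{a-1},p_a})`
(with `p_0 = p`, `p_r = q`), an element of `U(Q(m))^{⊗l}`. -/
def chainProdInc (m l : ℕ) (r : ℕ) (p q : Fin m) : TQ m l :=
  ∑ c : Fin (r + 1) → Fin m, ∑ iv : Fin r → Fin l,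
    (if c 0 = p ∧ c (Fin.last r) = q ∧ (∀ a b : Fin r, a < b → iv a < iv b)
      then (1 : ℂ) else 0) •
      (List.ofFn fun a : Fin r =>
        xT (iv a) (c a.castSucc) (c a.succ) +
          ((-1 : ℂ) ^ (r - 1 - a.val)) • xiT (iv a) (c a.castSucc) (c a.succ)).prod

/-- The elements `z^{(r)}_{±q,p}` of `U(Q(m))^{⊗l}`:  the even (`sgn = false`,
giving `z^{(r)}_{q,p}`) resp. odd (`sgn = true`, giving `z^{(r)}_{-q,p}`) component of
`chainProdDec`, computed using the parity involution `σT` of `U(Q(m))^{⊗l}`;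
`z^{(0)}_{q,p} = δ_{qp}`, `z^{(0)}_{-q,p} = 0`. -/
def zDec {m l : ℕ} (σT : TQ m l →ₐ[ℂ] TQ m l) :
    ℕ → Bool → Fin m → Fin m → TQ m l
  | 0, sgn, q, p => if sgn then 0 else algebraMap ℂ (TQ m l) (kd q p)
  | r + 1, sgn, q, p =>
      (2⁻¹ : ℂ) • (chainProdDec m l (r + 1) p q +
        (if sgn then (-1 : ℂ) else 1) • σT (chainProdDec m l (r + 1) p q))

/-- The elements `z̃^{(r)}_{±q,p}` of `U(Q(m))^{⊗l}` (as `zDec`, with increasing chains). -/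
def zInc {m l : ℕ} (σT : TQ m l →ₐ[ℂ] TQ m l) :
    ℕ → Bool → Fin m → Fin m → TQ m l
  | 0, sgn, q, p => if sgn then 0 else algebraMap ℂ (TQ m l) (kd q p)
  | r + 1, sgn, q, p =>
      (2⁻¹ : ℂ) • (chainProdInc m l (r + 1) p q +
        (if sgn then (-1 : ℂ) else 1) • σT (chainProdInc m l (r + 1) p q))

/-- The explicit formula for the antipode value `S(T^{(r)}_{i,j})` (`r ≥ 1`):
`S(T^{(r)}_{i,j}) = Σ_{m=1}^{r} (-1)^m Σ_{i_1,…,i_{m-1}} Σ_{r_1+⋯+r_m=r, r_a>0}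
(-1)^{ν(i,i_1,…,i_{m-1},j)} T^{(r_1)}_{i,i_1} ⋯ T^{(r_m)}_{i_{m-1},j}` where
`ν(i_0,…,i_m) = Σ_{0≤k<s≤m-1} (p(i_k)+p(i_{k+1}))(p(i_s)+p(i_{s+1}))`. -/
def STval {n : ℕ} (r : ℕ) (i j : QIdx n) : YQ n :=
  ∑ m : Fin r,
    ((-1 : ℂ) ^ (m.val + 1)) •
      ∑ ch : Fin (m.val + 2) → QIdx n, ∑ c : Fin (m.val + 1) → Fin (r + 1),
        (if ch 0 = i ∧ ch (Fin.last (m.val + 1)) = j ∧ (∀ a, 1 ≤ (c a).val) ∧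
              (∑ a, (c a).val) = r
          then ((-1 : ℂ) ^ (∑ a : Fin (m.val + 1), ∑ b : Fin (m.val + 1),
              if a < b then
                (qpar (ch a.castSucc) + qpar (ch a.succ)) *
                  (qpar (ch b.castSucc) + qpar (ch b.succ))
              else 0))
          else 0) •
        (List.ofFn fun a : Fin (m.val + 1) =>
          TY (c a).val (ch a.castSucc) (ch a.succ)).prod

/-! Write both sides as `n × n` matrices over `U(Q(n))^{⊗l}` and induct on `l`. Splitting the
antitone slot sequences `i_1 ≥ ⋯ ≥ i_r` according to how many of them equal the top slot gives
`C_{k+1}(r) = Σ_t ι_top(S_{r-t}((-1)^t)) · ι(C_k(t))` for the chain matrices `C`, where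
`S_s(ε) = (e^{(s)}_{pq} + ε f^{(s)}_{pq})_{p,q}`: the recursion defining `e^{(s)}` and
`f^{(s)}` is exactly `S_{s+1}(ε) = (e + ε (-1)^s f) S_s(ε)`. The iterated opposite coproduct
obeys the same recursion, up to the sign `(-1)^r`, for the matrices of the `T^{(r)+}_{q,p}`,
because `T^{(t)}_{-i,-j} = (-1)^t T^{(t)}_{i,j}` folds the odd summands onto the even ones. -/

open Finset

section AntitoneTuples

variable {M : Type*} [AddCommMonoid M] {s k : ℕ}

lemma antitone_cons_last_iff {g : Fin s → Fin (k + 1)} :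
    Antitone (Fin.cons (Fin.last k) g : Fin (s + 1) → Fin (k + 1)) ↔ Antitone g := by
  simpa [antitone_iff_forall_lt, Relator.LiftFun, Fin.le_last] using
    Fin.liftFun_cons (α := Fin (k + 1)) (· ≥ ·) (f := g) (a := Fin.last k)

lemma antitone_castSucc_comp_iff {g : Fin s → Fin k} :
    Antitone (Fin.castSucc ∘ g) ↔ Antitone g := by
  simp [Antitone, Fin.castSucc_le_castSucc_iff]

lemma sum_antitone_fin_succ (f : (Fin (s + 1) → Fin (k + 1)) → M) :
    ∑ g with Antitone g, f g =
      ∑ g : Fin s → Fin (k + 1) with Antitone g, f (Fin.cons (Fin.last k) g) +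
        ∑ g : Fin (s + 1) → Fin k with Antitone g, f (Fin.castSucc ∘ g) := by
  rw [← sum_filter_add_sum_filter_not _ (fun g => g 0 = Fin.last k), filter_filter,
    filter_filter]
  congr 1
  · refine sum_bij' (fun g _ => Fin.tail g) (fun g _ => Fin.cons (Fin.last k) g)
      (fun g hg => ?_) (fun g hg => ?_) (fun g hg => ?_) (fun g _ => Fin.tail_cons _ _)
      (fun g hg => ?_) <;>
      simp only [mem_filter, mem_univ, true_and] at hg ⊢
    · rw [← antitone_cons_last_iff, ← hg.2, Fin.cons_self_tail]
      exact hg.1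
    · exact ⟨antitone_cons_last_iff.2 hg, rfl⟩
    all_goals rw [← hg.2, Fin.cons_self_tail]
  · have hlt : ∀ g : Fin (s + 1) → Fin (k + 1), Antitone g ∧ ¬g 0 = Fin.last k →
        ∀ a, g a ≠ Fin.last k := fun g hg a =>
      ((Fin.lt_last_iff_ne_last.2 hg.2).trans_le' (hg.1 (Fin.zero_le a))).ne
    refine sum_bij' (fun g hg a => (g a).castPred (hlt g (by simpa using hg) a))
      (fun g _ => Fin.castSucc ∘ g) (fun g hg => ?_) (fun g hg => ?_) (fun g _ => ?_)
      (fun g _ => ?_) (fun g _ => ?_)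
    · simp only [mem_filter, mem_univ, true_and] at hg ⊢
      rw [← antitone_castSucc_comp_iff]
      exact hg.1
    · simp only [mem_filter, mem_univ, true_and] at hg ⊢
      exact ⟨antitone_castSucc_comp_iff.2 hg, (Fin.castSucc_lt_last _).ne⟩
    · exact funext fun a => Fin.castSucc_castPred _ _
    · exact funext fun a => Fin.castPred_castSucc _
    · rfl

end AntitoneTuples

lemma Matrix.list_ofFn_prod_apply {ι R : Type*} [Fintype ι] [DecidableEq ι] [Semiring R] :
    ∀ {r : ℕ} (A : Fin r → Matrix ι ι R) (p q : ι),
      (List.ofFn A).prod p q =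
        ∑ c : Fin (r + 1) → ι with c 0 = p ∧ c (Fin.last r) = q,
          (List.ofFn fun a => A a (c a.castSucc) (c a.succ)).prod
  | 0, A, p, q => by
    rw [sum_filter, ← (Equiv.funUnique (Fin 1) ι).symm.sum_comp]
    simp [Matrix.one_apply, ite_and, -Finset.sum_boole]
  | r + 1, A, p, q => by
    rw [sum_filter, ← (Fin.consEquiv fun _ => ι).sum_comp, Fintype.sum_prod_type,
      List.ofFn_succ, List.prod_cons, Matrix.mul_apply]
    simp only [Matrix.list_ofFn_prod_apply, mul_sum, sum_filter, Fin.consEquiv_apply]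
    rw [sum_comm]
    simp [Fin.cons_zero, ← Fin.succ_last, Fin.cons_succ, ite_and]

section Chains

variable {n k : ℕ}

def slotMatrix (e : ℕ) (i : Fin k) : Matrix (Fin n) (Fin n) (TQ n k) :=
  Matrix.of fun u v => xT i u v + ((-1 : ℂ) ^ e) • xiT i u v

variable (n k) in
def chainMatrix (r : ℕ) : Matrix (Fin n) (Fin n) (TQ n k) :=
  ∑ iv : Fin r → Fin k with Antitone iv,
    (List.ofFn fun a : Fin r => slotMatrix (r - 1 - a) (iv a)).prod

lemma chainProdDec_eq_chainMatrix_apply (r : ℕ) (p q : Fin n) :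
    chainProdDec n k r p q = chainMatrix n k r p q := by
  rw [chainProdDec, chainMatrix, Matrix.sum_apply, sum_comm, sum_filter]
  refine sum_congr rfl fun iv _ => ?_
  rw [Matrix.list_ofFn_prod_apply, sum_filter]
  have hanti : (∀ a b : Fin r, a ≤ b → iv b ≤ iv a) ↔ Antitone iv := Iff.rfl
  by_cases hiv : Antitone iv <;> simp [slotMatrix, hanti, hiv]

lemma chainMatrix_zero : chainMatrix n k 0 = 1 := by
  rw [chainMatrix, sum_filter, Fintype.sum_unique]
  simp [Subsingleton.antitone]

lemma chainMatrix_zero_slots (r : ℕ) : chainMatrix n 0 (r + 1) = 0 := by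
  rw [chainMatrix, sum_filter, Fintype.sum_empty]

variable (ish : TQ n k →ₐ[ℂ] TQ n (k + 1))
  (hishx : ∀ (a : Fin k) (i j : Fin n), ish (xT a i j) = xT a.castSucc i j)
  (hishxi : ∀ (a : Fin k) (i j : Fin n), ish (xiT a i j) = xiT a.castSucc i j)
include hishx hishxi

lemma mapMatrix_slotMatrix (e : ℕ) (i : Fin k) :
    ish.mapMatrix (slotMatrix e i) = slotMatrix (n := n) e i.castSucc := by
  ext u v
  simp [slotMatrix, hishx, hishxi]

lemma chainMatrix_succ_succ (r : ℕ) :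
    chainMatrix n (k + 1) (r + 1) =
      slotMatrix r (Fin.last k) * chainMatrix n (k + 1) r +
        ish.mapMatrix (chainMatrix n k (r + 1)) := by
  rw [chainMatrix, sum_antitone_fin_succ, chainMatrix, chainMatrix, mul_sum, map_sum]
  congr 1
  · refine sum_congr rfl fun iv _ => ?_
    rw [List.ofFn_succ, List.prod_cons]
    simp [Fin.cons_succ, Nat.sub_sub, add_comm 1]
  · refine sum_congr rfl fun iv _ => ?_
    rw [map_list_prod, List.map_ofFn]
    simp [mapMatrix_slotMatrix ish hishx hishxi]

end Chains

section Sergeev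

variable (n : ℕ)

def genMatrix (δ : ℂ) : Matrix (Fin n) (Fin n) (UQ n) :=
  Matrix.of fun i j => Ue i j + δ • Uf i j

def sergeevMatrix (s : ℕ) (ε : ℂ) : Matrix (Fin n) (Fin n) (UQ n) :=
  Matrix.of fun i j => eU s i j + ε • fU s i j

variable {n}

lemma sergeevMatrix_zero (ε : ℂ) : sergeevMatrix n 0 ε = 1 := by
  ext i j
  simp [sergeevMatrix, eU, fU, efU, kd, Matrix.one_apply]

lemma sergeevMatrix_succ (s : ℕ) {ε : ℂ} (hε : ε * ε = 1) :
    sergeevMatrix n (s + 1) ε = genMatrix n (ε * (-1) ^ s) * sergeevMatrix n s ε := by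
  ext i j
  simp only [sergeevMatrix, genMatrix, Matrix.mul_apply, Matrix.of_apply, eU, fU, efU,
    add_mul, mul_add, smul_mul_assoc, mul_smul_comm, smul_add, smul_smul, sum_add_distrib,
    ← smul_sum]
  match_scalars <;> simp [← mul_assoc, hε]

lemma mapMatrix_genMatrix {k : ℕ} (emb : UQ n →ₐ[ℂ] TQ n k) (i : Fin k)
    (hembx : ∀ u v : Fin n, emb (Ue u v) = xT i u v)
    (hembxi : ∀ u v : Fin n, emb (Uf u v) = xiT i u v) (e : ℕ) :
    emb.mapMatrix (genMatrix n ((-1) ^ e)) = slotMatrix e i := by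
  ext u v
  simp [genMatrix, slotMatrix, hembx, hembxi]

end Sergeev

section Decomposition

variable {n k : ℕ} (ish : TQ n k →ₐ[ℂ] TQ n (k + 1))
  (hishx : ∀ (a : Fin k) (i j : Fin n), ish (xT a i j) = xT a.castSucc i j)
  (hishxi : ∀ (a : Fin k) (i j : Fin n), ish (xiT a i j) = xiT a.castSucc i j)
  (emb : UQ n →ₐ[ℂ] TQ n (k + 1))
  (hembx : ∀ u v : Fin n, emb (Ue u v) = xT (Fin.last k) u v)
  (hembxi : ∀ u v : Fin n, emb (Uf u v) = xiT (Fin.last k) u v)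
include hishx hishxi hembx hembxi

lemma chainMatrix_succ_eq_sum (r : ℕ) :
    chainMatrix n (k + 1) r =
      ∑ t : Fin (r + 1), emb.mapMatrix (sergeevMatrix n (r - t) ((-1 : ℂ) ^ (t : ℕ))) *
        ish.mapMatrix (chainMatrix n k t) := by
  induction r with
  | zero => simp [chainMatrix_zero, sergeevMatrix_zero]
  | succ r ih =>
    rw [Fin.sum_univ_castSucc, chainMatrix_succ_succ ish hishx hishxi, ih, mul_sum]
    simp only [Fin.val_castSucc, Fin.val_last, Nat.sub_self, sergeevMatrix_zero, map_one,
      one_mul]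
    congr 1
    refine sum_congr rfl fun t _ => ?_
    have ht : (t : ℕ) ≤ r := Nat.lt_succ_iff.1 t.isLt
    have hsign : ((-1 : ℂ) ^ (t : ℕ)) * (-1) ^ (t : ℕ) = 1 := by
      rw [← mul_pow]; simp
    rw [← mul_assoc, Nat.sub_add_comm ht, sergeevMatrix_succ _ hsign, map_mul, ← pow_add,
      Nat.add_sub_cancel' ht, mapMatrix_genMatrix emb _ hembx hembxi]

end Decomposition

section Yangian

variable {n : ℕ}

lemma TY_qneg (t : ℕ) (i j : QIdx n) :
    TY t (qneg i) (qneg j) = ((-1 : ℂ) ^ t) • TY t i j := by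
  cases t with
  | zero => simp [TY, Tf, kdq, qneg, Prod.ext_iff]
  | succ t =>
    rw [TY, RingQuot.mkAlgHom_rel ℂ (YRel.par t i j), map_smul]
    rfl

lemma TY_neg_right (t : ℕ) (b : Bool) (q m : Fin n) :
    TY t (b, q) (true, m) = ((-1 : ℂ) ^ t) • TY t (!b, q) (false, m) := by
  simpa [qneg] using TY_qneg t (!b, q) (false, m)

lemma Uval_pos_pos (s : ℕ) (m p : Fin n) :
    Uval s (false, m) (false, p) = ((-1 : ℂ) ^ s) • eU s p m := by
  simp [Uval]

lemma Uval_neg_pos (s : ℕ) (m p : Fin n) :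
    Uval s (true, m) (false, p) = ((-1 : ℂ) ^ s) • fU s p m := by
  simp [Uval]

-- Transposed, so that the coproduct recursion becomes a matrix product in the natural order.
def tPlusMatrix {k : ℕ} (G : YQ n →ₐ[ℂ] TQ n k) (r : ℕ) :
    Matrix (Fin n) (Fin n) (TQ n k) :=
  Matrix.of fun p q => G (TY r (false, q) (false, p) + TY r (true, q) (false, p))

lemma tPlusMatrix_of_apply_TY {k : ℕ} (G : YQ n →ₐ[ℂ] TQ n k) (φ : UQ n →ₐ[ℂ] TQ n k)
    (hG : ∀ (s : ℕ) (i j : QIdx n), G (TY s i j) = φ (Uval s i j)) (r : ℕ) :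
    tPlusMatrix G r = ((-1 : ℂ) ^ r) • φ.mapMatrix (sergeevMatrix n r 1) := by
  ext p q
  simp [tPlusMatrix, sergeevMatrix, hG, Uval_pos_pos, Uval_neg_pos]

lemma tPlusMatrix_succ {k : ℕ} (G : YQ n →ₐ[ℂ] TQ n k) (G' : YQ n →ₐ[ℂ] TQ n (k + 1))
    (emb : UQ n →ₐ[ℂ] TQ n (k + 1)) (ish : TQ n k →ₐ[ℂ] TQ n (k + 1))
    (hG' : ∀ (s : ℕ) (i j : QIdx n),
      G' (TY s i j) = ∑ t : Fin (s + 1), ∑ kk : QIdx n,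
        emb (Uval (s - t) kk j) * ish (G (TY t i kk))) (r : ℕ) :
    tPlusMatrix G' r = ∑ t : Fin (r + 1), ((-1 : ℂ) ^ (r - t)) •
      (emb.mapMatrix (sergeevMatrix n (r - t) ((-1) ^ (t : ℕ))) *
        ish.mapMatrix (tPlusMatrix G t)) := by
  ext p q
  simp only [tPlusMatrix, Matrix.of_apply, map_add, hG', Matrix.sum_apply, Matrix.smul_apply,
    Matrix.mul_apply, AlgHom.mapMatrix_apply, Matrix.map_apply, ← sum_add_distrib,
    Fintype.sum_prod_type, Fintype.sum_bool, smul_sum]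
  refine sum_congr rfl fun t _ => sum_congr rfl fun m _ => ?_
  simp only [TY_neg_right, Bool.not_true, Bool.not_false, Uval_pos_pos, Uval_neg_pos,
    sergeevMatrix, Matrix.of_apply, map_add, map_smul, add_mul, mul_add, smul_mul_assoc,
    mul_smul_comm, smul_add]
  module

end Yangian

theorem statement11_general (n l : ℕ) (hl : 1 ≤ l) (p q : Fin n)
    (r : ℕ)
    (emb : ∀ k : ℕ, Fin k → (UQ n →ₐ[ℂ] TQ n k))
    (hembx : ∀ (k : ℕ) (a : Fin k) (i j : Fin n), emb k a (Ue i j) = xT a i j)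
    (hembxi : ∀ (k : ℕ) (a : Fin k) (i j : Fin n), emb k a (Uf i j) = xiT a i j)
    (ish : ∀ k : ℕ, TQ n k →ₐ[ℂ] TQ n (k + 1))
    (hishx : ∀ (k : ℕ) (a : Fin k) (i j : Fin n), ish k (xT a i j) = xT a.castSucc i j)
    (hishxi : ∀ (k : ℕ) (a : Fin k) (i j : Fin n), ish k (xiT a i j) = xiT a.castSucc i j)
    (G : ∀ k : ℕ, YQ n →ₐ[ℂ] TQ n k)
    (hG1 : ∀ (s : ℕ) (i j : QIdx n), G 1 (TY s i j) = emb 1 0 (Uval s i j))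
    (hGstep : ∀ (k : ℕ), 1 ≤ k → ∀ (s : ℕ) (i j : QIdx n),
      G (k + 1) (TY s i j) =
        ∑ t : Fin (s + 1), ∑ kk : QIdx n,
          emb (k + 1) (Fin.last k) (Uval (s - t.val) kk j) *
            ish k (G k (TY t.val i kk))) :
    G l (TY r (false, q) (false, p) + TY r (true, q) (false, p)) =
      ((-1 : ℂ) ^ r) • chainProdDec n l r p q := by
  have key : ∀ k r, tPlusMatrix (G (k + 1)) r = ((-1 : ℂ) ^ r) • chainMatrix n (k + 1) r := by
    intro k
    induction k with
    | zero =>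
      intro r
      rw [tPlusMatrix_of_apply_TY (G 1) (emb 1 0) hG1,
        chainMatrix_succ_eq_sum (ish 0) (hishx 0) (hishxi 0) (emb 1 0) (hembx 1 0) (hembxi 1 0),
        Fin.sum_univ_succ]
      simp [chainMatrix_zero, chainMatrix_zero_slots]
    | succ k ih =>
      intro r
      rw [tPlusMatrix_succ (G (k + 1)) _ _ (ish (k + 1)) (hGstep (k + 1) (by omega)),
        chainMatrix_succ_eq_sum (ish (k + 1)) (hishx _) (hishxi _) _ (hembx _ _) (hembxi _ _),
        smul_sum]
      refine sum_congr rfl fun t _ => ?_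
      rw [ih, map_smul, mul_smul_comm, smul_smul, ← pow_add,
        Nat.sub_add_cancel (Nat.lt_succ_iff.1 t.isLt)]
  obtain ⟨k, rfl⟩ := Nat.exists_eq_add_of_le' hl
  simpa [tPlusMatrix, chainProdDec_eq_chainMatrix_apply] using
    congrFun (congrFun (key k r) p) q

/-- Let `n, l ≥ 1`, `1 ≤ p,q ≤ n` and `r ≥ 1`.  Then in
`U(Q(n))^{⊗l}`:
`U^{⊗l}∘Δ_l^{op}(T^{(r)+}_{q,p}) = (-1)^r Σ_{p_1,…,p_{r-1}} Σ_{l ≥ i_1 ≥ … ≥ i_r ≥ 1}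
Π_{a=1}^r (x^{i_a}_{p_{a-1},p_a} + (-1)^{r-a} ξ^{i_a}_{p_{a-1},p_a})`
(`p_0 = p`, `p_r = q`), where `T^{(r)+}_{q,p} = T^{(r)}_{q,p} + T^{(r)}_{-q,p}`.
The family `G k = U^{⊗k}∘Δ_k^{op}` is characterized as in Statement 10. -/
theorem statement11 (n l : ℕ) (hn : 0 < n) (hl : 1 ≤ l) (p q : Fin n)
    (r : ℕ) (hr : 1 ≤ r)
    (emb : ∀ k : ℕ, Fin k → (UQ n →ₐ[ℂ] TQ n k))
    (hembx : ∀ (k : ℕ) (a : Fin k) (i j : Fin n), emb k a (Ue i j) = xT a i j)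
    (hembxi : ∀ (k : ℕ) (a : Fin k) (i j : Fin n), emb k a (Uf i j) = xiT a i j)
    (ish : ∀ k : ℕ, TQ n k →ₐ[ℂ] TQ n (k + 1))
    (hishx : ∀ (k : ℕ) (a : Fin k) (i j : Fin n), ish k (xT a i j) = xT a.castSucc i j)
    (hishxi : ∀ (k : ℕ) (a : Fin k) (i j : Fin n), ish k (xiT a i j) = xiT a.castSucc i j)
    (G : ∀ k : ℕ, YQ n →ₐ[ℂ] TQ n k)
    (hG1 : ∀ (s : ℕ) (i j : QIdx n), G 1 (TY s i j) = emb 1 0 (Uval s i j))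
    (hGstep : ∀ (k : ℕ), 1 ≤ k → ∀ (s : ℕ) (i j : QIdx n),
      G (k + 1) (TY s i j) =
        ∑ t : Fin (s + 1), ∑ kk : QIdx n,
          emb (k + 1) (Fin.last k) (Uval (s - t.val) kk j) *
            ish k (G k (TY t.val i kk))) :
    G l (TY r (false, q) (false, p) + TY r (true, q) (false, p)) =
      ((-1 : ℂ) ^ r) • chainProdDec n l r p q :=
  statement11_general n l hl p q r emb hembx hembxi ish hishx hishxi G hG1 hGstep
end
end

section
/- Let n, l ≥ 1, 1 ≤ p,q ≤ n, and r ≥ 1. Then in U(Q(n))^{⊗l}: Σ_{s+t=r, s,t ≥ 0} Σ_{j=1}^{n} ((−1)^s z_{j,p}^{(s)} + (−1)^r z_{−j,p}^{(s)}) · (z̃_{q,j}^{(t)} + z̃_{−q,j}^{(t)}) = 0. -/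
noncomputable section
open scoped Classical

set_option linter.unusedVariables false

/-!
Let `R` be the ring of `n × n` matrices over `U(Q(n))^{⊗l}`, let `τ` act on `R` by the parity
involution entrywise, and let `g_i ∈ R` be the matrix `(x^i_{pq} + ξ^i_{pq})_{p,q}`, so that
`τ^k g_i` has entries `x^i_{pq} + (-1)^k ξ^i_{pq}`. In the skew power series ring `R⟦u; τ⟧`
(where `a u = u τ(a)`) the coefficient of `u^t` in `G = (1 + u g_1) ⋯ (1 + u g_l)` is the matrix
of the sums over increasing chains that define `z̃^{(t)}`, and the coefficient of `u^s` in
`G⁻¹ = (1 + u g_l)⁻¹ ⋯ (1 + u g_1)⁻¹` is `(-1)^s` times the matrix of the sums over weakly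
decreasing chains that define `z^{(s)}`. In the coefficient of `u^r` in `G⁻¹ G = 1` the factor
coming from `G⁻¹` is twisted by `τ^{r-s}`, which, as `τ² = 1`, fixes the even part and multiplies
the odd part by `(-1)^{r-s}`; this is exactly the combination in the statement. Both chain
expansions are proved by induction on the set of slots, inserting its minimum.
-/

open Finset

theorem Fin.antitone_snoc_iff {α : Type*} [Preorder α] {s : ℕ} {w : Fin s → α} {x : α} :
    Antitone (Fin.snoc w x : Fin (s + 1) → α) ↔ (∀ j, x ≤ w j) ∧ Antitone w := by
  refine ⟨fun h => ⟨fun j => ?_, fun a b hab => ?_⟩, fun ⟨hx, hw⟩ a b hab => ?_⟩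
  · simpa using h (Fin.le_last j.castSucc)
  · simpa using h (Fin.castSucc_le_castSucc_iff.mpr hab)
  · induction b using Fin.lastCases with
    | last => induction a using Fin.lastCases <;> simp [hx]
    | cast b =>
      induction a using Fin.lastCases with
      | last => exact absurd hab (Fin.castSucc_lt_last b).not_ge
      | cast a => simpa using hw (Fin.castSucc_le_castSucc_iff.mp hab)

theorem Matrix.list_prod_ofFn_apply {R ι : Type*} [Semiring R] [Fintype ι] [DecidableEq ι]
    {t : ℕ} (M : Fin t → Matrix ι ι R) (p q : ι) :
    (List.ofFn M).prod p q = ∑ c : Fin (t + 1) → ι,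
      if c 0 = p ∧ c (Fin.last t) = q then
        (List.ofFn fun a => M a (c a.castSucc) (c a.succ)).prod else 0 := by
  induction t generalizing p with
  | zero =>
    rw [← (Equiv.funUnique (Fin 1) ι).symm.sum_comp]
    simp only [ite_and]
    simp [Matrix.one_apply]
  | succ t ih =>
    rw [List.ofFn_succ, List.prod_cons, Matrix.mul_apply,
      ← (Fin.consEquiv fun _ => ι).sum_comp, Fintype.sum_prod_type]
    simp only [ih, mul_sum, mul_ite, mul_zero]
    rw [sum_comm]
    simp only [Fin.consEquiv_apply, Fin.cons_zero, Fin.cons_last, List.ofFn_succ, List.prod_cons,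
      Fin.castSucc_zero, ← Fin.succ_castSucc, Fin.cons_succ, ite_and, sum_ite_eq, mem_univ,
      if_true]
    rw [Fintype.sum_eq_single p fun x hx => by simp [hx]]
    simp only [if_true]

theorem AlgHom.mapMatrix_toRingHom_pow_apply {R A m : Type*} [CommSemiring R] [Semiring A]
    [Algebra R A] [Fintype m] [DecidableEq m] (σ : A →ₐ[R] A) (k : ℕ) (M : Matrix m m A)
    (p q : m) : (σ.mapMatrix.toRingHom ^ k) M p q = (σ ^ k) (M p q) := by
  simp only [RingHom.coe_pow, AlgHom.coe_pow]
  induction k with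
  | zero => rfl
  | succ k ih =>
    rw [Function.iterate_succ_apply', Function.iterate_succ_apply', ← ih]
    rfl

namespace TwistedChain

variable {R : Type*} [Ring R] (τ : R →+* R)

/-- Coefficients of products in the skew power series ring `R⟦u; τ⟧`, where `a u = u τ(a)`. -/
def twistedConv (a b : ℕ → R) (r : ℕ) : R :=
  ∑ x ∈ antidiagonal r, (τ ^ x.2) (a x.1) * b x.2

theorem twistedConv_assoc (a b c : ℕ → R) :
    twistedConv τ (twistedConv τ a b) c = twistedConv τ a (twistedConv τ b c) := by
  funext r
  simp only [twistedConv, map_sum, map_mul, sum_mul, mul_sum, sum_sigma', mul_assoc]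
  apply sum_nbij' (fun x ↦ ⟨(x.2.1, x.1.2 + x.2.2), (x.2.2, x.1.2)⟩)
    (fun x ↦ ⟨(x.1.1 + x.2.1, x.2.2), (x.1.1, x.2.1)⟩) <;>
    rintro ⟨⟨_, _⟩, ⟨_, _⟩⟩ h <;> simp_all [Function.iterate_add_apply] <;> omega

theorem twistedConv_zero (a b : ℕ → R) : twistedConv τ a b 0 = a 0 * b 0 := by
  simp [twistedConv]

theorem single_zero_one_twistedConv (b : ℕ → R) : twistedConv τ (Pi.single 0 1) b = b := by
  funext r
  rw [twistedConv, sum_eq_single (0, r)]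
  · simp
  · rintro ⟨i, j⟩ hij hne
    have : i ≠ 0 := by
      rintro rfl
      simp_all
    simp [this]
  · simp

/-- The series `1 + u x`. -/
def linearSeq (x : R) : ℕ → R
  | 0 => 1
  | 1 => x
  | _ + 2 => 0

theorem linearSeq_twistedConv_succ (x : R) (b : ℕ → R) (r : ℕ) :
    twistedConv τ (linearSeq x) b (r + 1) = b (r + 1) + (τ ^ r) x * b r := by
  rw [twistedConv, Nat.sum_antidiagonal_eq_sum_range_succ_mk, sum_range_succ', sum_range_succ']
  simp [linearSeq, add_comm]

theorem twistedConv_linearSeq_succ (a : ℕ → R) (x : R) (r : ℕ) :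
    twistedConv τ a (linearSeq x) (r + 1) = a (r + 1) + τ (a r) * x := by
  rw [twistedConv, Nat.sum_antidiagonal_eq_sum_range_succ_mk, sum_range_succ, sum_range_succ,
    sum_eq_zero fun k hk => ?_]
  · simp [linearSeq, add_comm]
  · obtain ⟨m, hm⟩ : ∃ m, r + 1 - k = m + 2 := ⟨r - 1 - k, by grind⟩
    simp [hm, linearSeq]

variable {ι : Type*} (g : ι → R)

def twistedProd {t : ℕ} (c : Fin t → ι) : R :=
  (List.ofFn fun a : Fin t => (τ ^ (t - 1 - a)) (g (c a))).prod

theorem twistedProd_cons {t : ℕ} (i : ι) (c : Fin t → ι) :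
    twistedProd τ g (Fin.cons i c : Fin (t + 1) → ι) = (τ ^ t) (g i) * twistedProd τ g c := by
  simp only [twistedProd, List.ofFn_succ, List.prod_cons, Fin.cons_zero, Fin.cons_succ,
    Fin.val_zero, Fin.val_succ]
  congr 4 with a
  rw [show t + 1 - 1 - (a + 1) = t - 1 - a by omega]

theorem twistedProd_snoc {s : ℕ} (c : Fin s → ι) (i : ι) :
    twistedProd τ g (Fin.snoc c i : Fin (s + 1) → ι) = τ (twistedProd τ g c) * g i := by
  simp only [twistedProd, List.ofFn_succ', List.prod_concat, Fin.snoc_castSucc, Fin.snoc_last,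
    Fin.val_last, Fin.val_castSucc, map_list_prod, List.map_ofFn]
  rw [show s + 1 - 1 - s = 0 by omega, pow_zero, RingHom.coe_one, id]
  congr 3 with a
  rw [show s + 1 - 1 - a = s - 1 - a + 1 by omega, pow_succ']
  rfl

theorem twistedProd_neg {t : ℕ} (c : Fin t → ι) :
    twistedProd τ (-g) c = (-1) ^ t * twistedProd τ g c := by
  have h := List.prod_map_neg (List.ofFn fun a : Fin t => (τ ^ (t - 1 - a)) (g (c a)))
  rw [List.length_ofFn, List.map_ofFn] at h
  rw [twistedProd, twistedProd, ← h]
  simp [Function.comp_def]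

variable [LinearOrder ι] [Fintype ι]

def incChainSum (S : Finset ι) (t : ℕ) : R :=
  ∑ c : Fin t → ι with StrictMono c ∧ ∀ a, c a ∈ S, twistedProd τ g c

def decChainSum (S : Finset ι) (s : ℕ) : R :=
  ∑ c : Fin s → ι with Antitone c ∧ ∀ a, c a ∈ S, twistedProd τ g c

theorem incChainSum_zero (S : Finset ι) : incChainSum τ g S 0 = 1 := by
  simp [incChainSum, twistedProd, Subsingleton.strictMono]

theorem decChainSum_zero (S : Finset ι) : decChainSum τ g S 0 = 1 := by
  simp [decChainSum, twistedProd, Subsingleton.antitone]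

theorem incChainSum_empty : incChainSum τ g ∅ = Pi.single 0 1 := by
  funext t
  cases t with
  | zero => simp [incChainSum_zero]
  | succ t => simp [incChainSum]

theorem decChainSum_empty : decChainSum τ g ∅ = Pi.single 0 1 := by
  funext t
  cases t with
  | zero => simp [decChainSum_zero]
  | succ t => simp [decChainSum]

theorem decChainSum_neg (S : Finset ι) (s : ℕ) :
    decChainSum τ (-g) S s = (-1) ^ s * decChainSum τ g S s := by
  simp only [decChainSum, twistedProd_neg, mul_sum]

variable {i : ι} {S : Finset ι}

theorem incChainSum_insert_succ (hi : ∀ j ∈ S, i < j) (t : ℕ) :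
    incChainSum τ g (insert i S) (t + 1) =
      incChainSum τ g S (t + 1) + (τ ^ t) (g i) * incChainSum τ g S t := by
  have hsplit : ({c : Fin (t + 1) → ι | StrictMono c ∧ ∀ a, c a ∈ insert i S} : Finset _) =
      ({c | StrictMono c ∧ ∀ a, c a ∈ S} : Finset _) ∪
        ({w : Fin t → ι | StrictMono w ∧ ∀ a, w a ∈ S} : Finset _).image (Fin.cons i) := by
    ext c
    obtain ⟨x, w, rfl⟩ : ∃ x w, c = Fin.cons x w :=
      ⟨c 0, Fin.tail c, (Fin.cons_self_tail c).symm⟩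
    simp only [mem_union, mem_filter, mem_univ, true_and, mem_image, Fin.strictMono_cons,
      Fin.forall_fin_succ, Fin.cons_zero, Fin.cons_succ, mem_insert, Fin.cons_inj]
    constructor
    · rintro ⟨⟨hxw, hw⟩, rfl | hx, hwS⟩
      · exact Or.inr ⟨w, ⟨hw, fun a => (hwS a).resolve_left (hxw a).ne'⟩, rfl, rfl⟩
      · exact Or.inl ⟨⟨hxw, hw⟩, hx,
          fun a => (hwS a).resolve_left ((hi x hx).trans (hxw a)).ne'⟩
    · rintro (⟨hxw, hx, hwS⟩ | ⟨w, ⟨hw, hwS⟩, rfl, rfl⟩)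
      · exact ⟨hxw, Or.inr hx, fun a => Or.inr (hwS a)⟩
      · exact ⟨⟨fun a => hi _ (hwS a), hw⟩, Or.inl rfl, fun a => Or.inr (hwS a)⟩
  have hdisj : Disjoint ({c : Fin (t + 1) → ι | StrictMono c ∧ ∀ a, c a ∈ S} : Finset _)
      (({w : Fin t → ι | StrictMono w ∧ ∀ a, w a ∈ S} : Finset _).image (Fin.cons i)) := by
    simp only [disjoint_left, mem_filter, mem_univ, true_and, mem_image]
    rintro _ ⟨-, hS⟩ ⟨w, -, rfl⟩
    exact (hi i (hS 0)).false
  simp only [incChainSum, hsplit, sum_union hdisj,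
    sum_image (Fin.cons_right_injective (α := fun _ => ι) i).injOn, twistedProd_cons, mul_sum]

theorem decChainSum_insert_succ (hi : ∀ j ∈ S, i < j) (s : ℕ) :
    decChainSum τ g (insert i S) (s + 1) =
      decChainSum τ g S (s + 1) + τ (decChainSum τ g (insert i S) s) * g i := by
  have hsplit : ({c : Fin (s + 1) → ι | Antitone c ∧ ∀ a, c a ∈ insert i S} : Finset _) =
      ({c | Antitone c ∧ ∀ a, c a ∈ S} : Finset _) ∪
        ({w : Fin s → ι | Antitone w ∧ ∀ a, w a ∈ insert i S} : Finset _).image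
          (Fin.snoc · i) := by
    ext c
    obtain ⟨w, x, rfl⟩ : ∃ w x, c = Fin.snoc w x :=
      ⟨Fin.init c, c (Fin.last s), (Fin.snoc_init_self c).symm⟩
    simp only [mem_union, mem_filter, mem_univ, true_and, mem_image, Fin.antitone_snoc_iff,
      Fin.forall_iff_castSucc, Fin.snoc_last, Fin.snoc_castSucc, mem_insert, Fin.snoc_inj]
    constructor
    · rintro ⟨⟨hxw, hw⟩, rfl | hx, hwS⟩
      · exact Or.inr ⟨w, ⟨hw, hwS⟩, rfl, rfl⟩
      · exact Or.inl ⟨⟨hxw, hw⟩, hx,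
          fun a => (hwS a).resolve_left ((hi x hx).trans_le (hxw a)).ne'⟩
    · rintro (⟨hxw, hx, hwS⟩ | ⟨w, ⟨hw, hwS⟩, rfl, rfl⟩)
      · exact ⟨hxw, Or.inr hx, fun a => Or.inr (hwS a)⟩
      · exact ⟨⟨fun a => (hwS a).elim ge_of_eq fun h => (hi _ h).le, hw⟩, Or.inl rfl, hwS⟩
  have hdisj : Disjoint ({c : Fin (s + 1) → ι | Antitone c ∧ ∀ a, c a ∈ S} : Finset _)
      (({w : Fin s → ι | Antitone w ∧ ∀ a, w a ∈ insert i S} : Finset _).image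
        (Fin.snoc · i)) := by
    simp only [disjoint_left, mem_filter, mem_univ, true_and, mem_image]
    rintro _ ⟨-, hS⟩ ⟨w, -, rfl⟩
    exact (hi i (by simpa using hS (Fin.last s))).false
  simp only [decChainSum, hsplit, sum_union hdisj,
    sum_image (Fin.snoc_left_injective (α := fun _ => ι) i).injOn, twistedProd_snoc, map_sum,
    sum_mul]

theorem incChainSum_insert (hi : ∀ j ∈ S, i < j) :
    incChainSum τ g (insert i S) = twistedConv τ (linearSeq (g i)) (incChainSum τ g S) := by
  funext t
  cases t with
  | zero => simp [twistedConv_zero, incChainSum_zero, linearSeq]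
  | succ t => rw [linearSeq_twistedConv_succ, incChainSum_insert_succ τ g hi]

theorem decChainSum_insert (hi : ∀ j ∈ S, i < j) :
    twistedConv τ (decChainSum τ g (insert i S)) (linearSeq (-g i)) = decChainSum τ g S := by
  funext s
  cases s with
  | zero => simp [twistedConv_zero, decChainSum_zero, linearSeq]
  | succ s => rw [twistedConv_linearSeq_succ, decChainSum_insert_succ τ g hi, mul_neg,
      add_neg_cancel_right]

theorem twistedConv_decChainSum_neg_incChainSum (S : Finset ι) :
    twistedConv τ (decChainSum τ (-g) S) (incChainSum τ g S) = Pi.single 0 1 := by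
  induction S using Finset.induction_on_min with
  | empty => rw [decChainSum_empty, incChainSum_empty, single_zero_one_twistedConv]
  | insert i S hi ih =>
    rw [incChainSum_insert τ g hi, ← twistedConv_assoc, ← ih]
    congr 1
    simpa using decChainSum_insert τ (-g) hi

end TwistedChain

namespace TQ

open TwistedChain

variable {n l : ℕ}

structure IsParity (σT : TQ n l →ₐ[ℂ] TQ n l) : Prop where
  map_xT (i : Fin l) (a b : Fin n) : σT (xT i a b) = xT i a b
  map_xiT (i : Fin l) (a b : Fin n) : σT (xiT i a b) = -xiT i a b

def slotMatrix (i : Fin l) : Matrix (Fin n) (Fin n) (TQ n l) :=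
  Matrix.of fun p q => xT i p q + xiT i p q

namespace IsParity

variable {σT : TQ n l →ₐ[ℂ] TQ n l}

theorem sq_eq_one (hσ : IsParity σT) : σT ^ 2 = 1 := by
  rw [sq]
  refine RingQuot.ringQuot_ext' _ _ _ (FreeAlgebra.hom_ext (funext fun x => ?_))
  cases x with
  | X i a b => exact (congrArg σT (hσ.map_xT i a b)).trans (hσ.map_xT i a b)
  | Xi i a b =>
    exact (congrArg σT (hσ.map_xiT i a b)).trans (by rw [map_neg, hσ.map_xiT, neg_neg]; rfl)

theorem pow_slotMatrix_apply (hσ : IsParity σT) (k : ℕ) (i : Fin l) (p q : Fin n) :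
    (σT.mapMatrix.toRingHom ^ k) (slotMatrix i) p q = xT i p q + (-1 : ℂ) ^ k • xiT i p q := by
  rw [AlgHom.mapMatrix_toRingHom_pow_apply]
  induction k with
  | zero => simp [slotMatrix]
  | succ k ih => rw [pow_succ', AlgHom.mul_apply, ih, map_add, map_smul, hσ.map_xT, hσ.map_xiT,
      pow_succ', smul_neg, ← neg_smul, neg_one_mul]

theorem sum_twistedProd_slotMatrix_apply (hσ : IsParity σT) {t : ℕ}
    (P : (Fin t → Fin l) → Prop) [DecidablePred P] (p q : Fin n) :
    (∑ c with P c, twistedProd σT.mapMatrix.toRingHom slotMatrix c) p q =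
      ∑ path : Fin (t + 1) → Fin n, ∑ c : Fin t → Fin l,
        (if path 0 = p ∧ path (Fin.last t) = q ∧ P c then (1 : ℂ) else 0) •
          (List.ofFn fun a : Fin t => xT (c a) (path a.castSucc) (path a.succ) +
            ((-1 : ℂ) ^ (t - 1 - a.val)) • xiT (c a) (path a.castSucc) (path a.succ)).prod := by
  simp only [Matrix.sum_apply, twistedProd, Matrix.list_prod_ofFn_apply,
    hσ.pow_slotMatrix_apply, sum_filter]
  rw [sum_comm]
  refine sum_congr rfl fun c _ => ?_
  by_cases h : P c <;> simp [h]

theorem chainProdInc_eq_incChainSum (hσ : IsParity σT) (t : ℕ) (p q : Fin n) :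
    chainProdInc n l t p q = incChainSum σT.mapMatrix.toRingHom slotMatrix univ t p q := by
  rw [incChainSum, hσ.sum_twistedProd_slotMatrix_apply]
  simp [chainProdInc, StrictMono]

theorem chainProdDec_eq_decChainSum (hσ : IsParity σT) (s : ℕ) (p q : Fin n) :
    chainProdDec n l s p q = decChainSum σT.mapMatrix.toRingHom slotMatrix univ s p q := by
  rw [decChainSum, hσ.sum_twistedProd_slotMatrix_apply]
  simp [chainProdDec, Antitone]

end IsParity

theorem chainProdDec_zero (p q : Fin n) :
    chainProdDec n l 0 p q = algebraMap ℂ (TQ n l) (kd q p) := by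
  rw [chainProdDec, ← (Equiv.funUnique (Fin 1) (Fin n)).symm.sum_comp]
  simp only [ite_and]
  simp [kd, eq_comm]

theorem chainProdInc_zero (p q : Fin n) :
    chainProdInc n l 0 p q = algebraMap ℂ (TQ n l) (kd q p) := by
  rw [chainProdInc, ← (Equiv.funUnique (Fin 1) (Fin n)).symm.sum_comp]
  simp only [ite_and]
  simp [kd, eq_comm]

theorem zDec_add_neg_one_pow_smul {σT : TQ n l →ₐ[ℂ] TQ n l} (hσ : σT ^ 2 = 1) (s k : ℕ)
    (q p : Fin n) :
    zDec σT s false q p + (-1 : ℂ) ^ k • zDec σT s true q p =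
      (σT ^ k) (chainProdDec n l s p q) := by
  obtain ⟨m, rfl | rfl⟩ := Nat.even_or_odd' k
  · rw [pow_mul, pow_mul, hσ, one_pow, neg_one_sq, one_pow, one_smul, AlgHom.one_apply]
    cases s with
    | zero => simp [zDec, chainProdDec_zero]
    | succ s => simp only [zDec, Bool.false_eq_true, if_false, if_true]; module
  · rw [pow_succ, pow_succ, pow_mul, pow_mul, hσ, one_pow, neg_one_sq, one_pow, one_mul, one_mul]
    cases s with
    | zero => simp [zDec, chainProdDec_zero]
    | succ s => simp only [zDec, Bool.false_eq_true, if_false, if_true]; module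

theorem zInc_add {σT : TQ n l →ₐ[ℂ] TQ n l} (t : ℕ) (q p : Fin n) :
    zInc σT t false q p + zInc σT t true q p = chainProdInc n l t p q := by
  cases t with
  | zero => simp [zInc, chainProdInc_zero]
  | succ t => simp only [zInc, Bool.false_eq_true, if_false, if_true]; module

end TQ

open TwistedChain TQ in
theorem statement19_general (n l : ℕ) (p q : Fin n)
    (r : ℕ) (hr : 1 ≤ r)
    (σT : TQ n l →ₐ[ℂ] TQ n l)
    (hσTx : ∀ (i : Fin l) (a b : Fin n), σT (xT i a b) = xT i a b)
    (hσTxi : ∀ (i : Fin l) (a b : Fin n), σT (xiT i a b) = -xiT i a b) :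
    ∑ s : Fin (r + 1), ∑ j : Fin n,
      (((-1 : ℂ) ^ s.val) • zDec σT s.val false j p +
        ((-1 : ℂ) ^ r) • zDec σT s.val true j p) *
      (zInc σT (r - s.val) false q j + zInc σT (r - s.val) true q j) = 0 := by
  have hσ : IsParity σT := ⟨hσTx, hσTxi⟩
  have key := congrArg (· p q)
    (congrFun (twistedConv_decChainSum_neg_incChainSum σT.mapMatrix.toRingHom slotMatrix univ) r)
  simp only [Pi.single_eq_of_ne (by omega : r ≠ 0), Matrix.zero_apply, twistedConv,
    Nat.sum_antidiagonal_eq_sum_range_succ_mk, Matrix.sum_apply, Matrix.mul_apply,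
    ← Fin.sum_univ_eq_sum_range] at key
  rw [← key]
  refine sum_congr rfl fun s _ => sum_congr rfl fun j _ => ?_
  rw [zInc_add, hσ.chainProdInc_eq_incChainSum]
  congr 1
  have hsr : s + (r - s) = r := Nat.add_sub_cancel' (Nat.lt_succ_iff.mp s.isLt)
  rw [AlgHom.mapMatrix_toRingHom_pow_apply, decChainSum_neg,
    ← neg_one_smul ℂ (1 : Matrix (Fin n) (Fin n) (TQ n l)), smul_pow, one_pow, smul_mul_assoc,
    one_mul, Matrix.smul_apply, ← hσ.chainProdDec_eq_decChainSum, map_smul,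
    ← zDec_add_neg_one_pow_smul hσ.sq_eq_one, smul_add, smul_smul, ← pow_add, hsr]

/-- Let `n, l ≥ 1`, `1 ≤ p,q ≤ n` and `r ≥ 1`.  Then in
`U(Q(n))^{⊗l}`:
`Σ_{s+t=r} Σ_{j=1}^n ((-1)^s z^{(s)}_{j,p} + (-1)^r z^{(s)}_{-j,p}) (z̃^{(t)}_{q,j} + z̃^{(t)}_{-q,j}) = 0`,
where the even/odd components defining `z`, `z̃` are taken w.r.t. the parity involution
`σT` of `U(Q(n))^{⊗l}`. -/
theorem statement19 (n l : ℕ) (hn : 0 < n) (hl : 0 < l) (p q : Fin n)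
    (r : ℕ) (hr : 1 ≤ r)
    (σT : TQ n l →ₐ[ℂ] TQ n l)
    (hσTx : ∀ (i : Fin l) (a b : Fin n), σT (xT i a b) = xT i a b)
    (hσTxi : ∀ (i : Fin l) (a b : Fin n), σT (xiT i a b) = -xiT i a b) :
    ∑ s : Fin (r + 1), ∑ j : Fin n,
      (((-1 : ℂ) ^ s.val) • zDec σT s.val false j p +
        ((-1 : ℂ) ^ r) • zDec σT s.val true j p) *
      (zInc σT (r - s.val) false q j + zInc σT (r - s.val) true q j) = 0 :=
  statement19_general n l p q r hr σT hσTx hσTxi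
end
end
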